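/- Let θ ∈ Ω¹(P) ⊗ 𝔤 be a connection on a principal G-bundle P over a Lie groupoid Γ ⇉ Γ₀, and let φ : Γ₀' ← Z → Γ₀ be a generalized homomorphism from Γ' ⇉ Γ₀' to Γ ⇉ Γ₀, with pull-back bundle P' = (Z ×_{Γ₀} P)/Γ over Γ'. Then: (1) there is a unique θ' ∈ Ω¹(P') ⊗ 𝔤 with τ̃*θ' = σ̃*θ, where τ̃ : Z ×_{Γ₀} P → P' is the quotient projection and σ̃ : Z ×_{Γ₀} P → P the second projection; (2) θ' is a connection on P' over Γ' (the pull-back connection φ*θ); (3) the curvatures satisfy τ̃*Ω' = σ̃*Ω; (4) φ*θ is flat whenever θ is flat; (5) for composable generalized homomorphisms ψ, φ, one has (φ ∘ ψ)*θ = ψ*(φ*θ). -/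

import Mathlib

/-!
Shared abstract framework for "Chern-Weil map for principal bundles over groupoids"
(Laurent-Gengoux, Tu, Xu).  Smooth structures are abstracted away: a Lie groupoid is
modelled by its underlying (set-level) groupoid, and the de Rham functor is modelled
by an abstract contravariant functor of graded-commutative differential algebras.
-/

open scoped TensorProduct

noncomputable section

/-- A (Lie) groupoid `Γ ⇉ Γ₀`; `s` is the source (`β`), `t` is the target (`α`). -/
structure Gpd where
  O : Type
  M : Type
  s : M → O
  t : M → O
  comp : ∀ g h : M, s g = t h → M
  unit : O → M
  inv : M → M
  s_comp : ∀ g h hc, s (comp g h hc) = s h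
  t_comp : ∀ g h hc, t (comp g h hc) = t g
  s_unit : ∀ x, s (unit x) = x
  t_unit : ∀ x, t (unit x) = x
  s_inv : ∀ g, s (inv g) = t g
  t_inv : ∀ g, t (inv g) = s g
  comp_assoc : ∀ g h k (hgh : s g = t h) (hhk : s h = t k),
    comp (comp g h hgh) k ((s_comp g h hgh).trans hhk) =
      comp g (comp h k hhk) (hgh.trans (t_comp h k hhk).symm)
  unit_comp : ∀ g, comp (unit (t g)) g (s_unit (t g)) = g
  comp_unit : ∀ g, comp g (unit (s g)) (t_unit (s g)).symm = g
  inv_comp : ∀ g, comp (inv g) g (s_inv g) = unit (s g)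
  comp_inv : ∀ g, comp g (inv g) (t_inv g).symm = unit (t g)

/-- A principal `G`-bundle datum `P → B` (right `G`-action covering `proj`). -/
structure PrinBundle (G : Type) [Group G] (P B : Type) where
  proj : P → B
  act : P → G → P
  act_one : ∀ p, act p 1 = p
  act_mul : ∀ p g h, act (act p g) h = act p (g * h)
  proj_act : ∀ p g, proj (act p g) = proj p

/-- Principality: `proj` is onto and `G` acts freely and transitively on fibres. -/
def PrinBundle.IsPrincipal {G P B : Type} [Group G] (Bd : PrinBundle G P B) : Prop :=
  Function.Surjective Bd.proj ∧ ∀ p q, Bd.proj p = Bd.proj q → ∃! g, Bd.act p g = q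

/-- A principal `G`-bundle over the groupoid `Γ ⇉ Γ₀`: a principal `G`-bundle
`P → Γ₀` together with a left `Γ`-action commuting with the `G`-action. -/
structure GpdBundle (G : Type) [Group G] (Γ : Gpd) (P : Type)
    extends PrinBundle G P Γ.O where
  gact : ∀ (γ : Γ.M) (p : P), Γ.s γ = proj p → P
  gact_proj : ∀ γ p h, proj (gact γ p h) = Γ.t γ
  gact_unit : ∀ p, gact (Γ.unit (proj p)) p (Γ.s_unit _) = p
  gact_comp : ∀ γ₁ γ₂ p (h₁ : Γ.s γ₁ = Γ.t γ₂) (h₂ : Γ.s γ₂ = proj p),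
    gact γ₁ (gact γ₂ p h₂) (h₁.trans (gact_proj γ₂ p h₂).symm)
      = gact (Γ.comp γ₁ γ₂ h₁) p ((Γ.s_comp γ₁ γ₂ h₁).trans h₂)
  gact_act : ∀ γ p g (h : Γ.s γ = proj p),
    gact γ (act p g) (h.trans (proj_act p g).symm) = act (gact γ p h) g

/-- Carrier of an abstract "differential forms" functor. -/
structure FormsCarrier where
  Ω : Type → Type
  ringΩ : ∀ X, Ring (Ω X)

attribute [instance] FormsCarrier.ringΩ

structure FormsCarrier₂ extends FormsCarrier where
  algΩ : ∀ X, Algebra ℝ (Ω X)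

attribute [instance] FormsCarrier₂.algΩ

/-- An abstract de Rham functor: to each space `X` a graded-commutative differential
`ℝ`-algebra `Ω X`, contravariantly functorial in `X`. -/
structure FormsTheory extends FormsCarrier₂ where
  d : ∀ X : Type, Ω X →ₗ[ℝ] Ω X
  pull : ∀ {X Y : Type}, (X → Y) → (Ω Y →ₐ[ℝ] Ω X)
  gr : ∀ X : Type, ℕ → Submodule ℝ (Ω X)
  d_d : ∀ (X : Type) ω, d X (d X ω) = 0
  d_one : ∀ X : Type, d X 1 = 0
  pull_id : ∀ (X : Type) ω, pull (id : X → X) ω = ω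
  pull_comp : ∀ {X Y Z : Type} (f : X → Y) (g : Y → Z) ω,
    pull (g ∘ f) ω = pull f (pull g ω)
  pull_d : ∀ {X Y : Type} (f : X → Y) ω, pull f (d Y ω) = d X (pull f ω)
  d_gr : ∀ (X : Type) k ω, ω ∈ gr X k → d X ω ∈ gr X (k + 1)
  mul_gr : ∀ (X : Type) k l a b, a ∈ gr X k → b ∈ gr X l → a * b ∈ gr X (k + l)
  pull_gr : ∀ {X Y : Type} (f : X → Y) k ω, ω ∈ gr Y k → pull f ω ∈ gr X k
  one_gr : ∀ X : Type, (1 : Ω X) ∈ gr X 0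
  comm_gr : ∀ (X : Type) k l a b, a ∈ gr X k → b ∈ gr X l →
    a * b = ((-1 : ℝ) ^ (k * l)) • (b * a)

/-- Degree-`k` part of the `𝔤`-valued forms `Ω X ⊗ 𝔤`. -/
def grT (F : FormsTheory) (X : Type) (𝔤 : Type) [AddCommGroup 𝔤] [Module ℝ 𝔤] (k : ℕ) :
    Submodule ℝ (F.Ω X ⊗[ℝ] 𝔤) :=
  LinearMap.range (TensorProduct.map (F.gr X k).subtype (LinearMap.id (M := 𝔤)))

/-- Pull-back of `𝔤`-valued forms. -/
def pullT (F : FormsTheory) {X Y : Type} (f : X → Y)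
    (𝔤 : Type) [AddCommGroup 𝔤] [Module ℝ 𝔤] :
    F.Ω Y ⊗[ℝ] 𝔤 →ₗ[ℝ] F.Ω X ⊗[ℝ] 𝔤 :=
  LinearMap.rTensor 𝔤 (F.pull f).toLinearMap

/-- The bracket `[ω₁ ⊗ X₁, ω₂ ⊗ X₂] = (ω₁ ∧ ω₂) ⊗ [X₁, X₂]` on `A ⊗ 𝔤`. -/
def brT (A : Type) [Ring A] [Algebra ℝ A] (𝔤 : Type) [LieRing 𝔤] [LieAlgebra ℝ 𝔤] :
    A ⊗[ℝ] 𝔤 →ₗ[ℝ] A ⊗[ℝ] 𝔤 →ₗ[ℝ] A ⊗[ℝ] 𝔤 :=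
  TensorProduct.curry
    ((TensorProduct.map (LinearMap.mul' ℝ A)
        (TensorProduct.lift ((LieAlgebra.ad ℝ 𝔤 : 𝔤 →ₗ[ℝ] Module.End ℝ 𝔤)))).comp
      (TensorProduct.tensorTensorTensorComm ℝ A 𝔤 A 𝔤).toLinearMap)

/-- Contraction operators `i_X` by the fundamental vector fields of the `G`-action
(the `G`-differential algebra structure on `Ω P`). -/
structure ContractionData (F : FormsTheory) (𝔤 : Type) [AddCommGroup 𝔤] [Module ℝ 𝔤]
    (P : Type) where
  i : 𝔤 → (F.Ω P →ₗ[ℝ] F.Ω P)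
  i_anticomm : ∀ X Y ω, i X (i Y ω) + i Y (i X ω) = 0

/-- A pseudo-connection: a connection 1-form `θ ∈ Ω¹(P) ⊗ 𝔤` for the `G`-bundle
`P → Γ₀`, forgetting the `Γ`-action: `θ` has degree 1, `i_X θ = 1 ⊗ X`, and `θ` is
`G`-equivariant (`R_g^* θ = Ad_{g⁻¹} θ`). -/
def IsPseudoConn (G : Type) [Group G] (𝔤 : Type) [LieRing 𝔤] [LieAlgebra ℝ 𝔤]
    (Ad : G →* Module.End ℝ 𝔤) {Γ : Gpd} {P : Type}
    (F : FormsTheory) (B : GpdBundle G Γ P) (cd : ContractionData F 𝔤 P)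
    (θ : F.Ω P ⊗[ℝ] 𝔤) : Prop :=
  θ ∈ grT F P 𝔤 1 ∧
  (∀ X : 𝔤, LinearMap.rTensor 𝔤 (cd.i X) θ = (1 : F.Ω P) ⊗ₜ[ℝ] X) ∧
  (∀ g : G, pullT F (fun p => B.act p g) 𝔤 θ = LinearMap.lTensor (F.Ω P) (Ad g⁻¹) θ)

/-- Space of the transformation groupoid `Q = Γ ×_{Γ₀} P ⇉ P`. -/
def QSp {G : Type} [Group G] {Γ : Gpd} {P : Type} (B : GpdBundle G Γ P) : Type :=
  {x : Γ.M × P // Γ.s x.1 = B.proj x.2}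

/-- Source map `β(γ, p) = p` of the transformation groupoid. -/
def Qbeta {G : Type} [Group G] {Γ : Gpd} {P : Type} (B : GpdBundle G Γ P) :
    QSp B → P := fun x => x.1.2

/-- Target map `α(γ, p) = γ · p` of the transformation groupoid. -/
def Qalpha {G : Type} [Group G] {Γ : Gpd} {P : Type} (B : GpdBundle G Γ P) :
    QSp B → P := fun x => B.gact x.1.1 x.1.2 x.2

/-- The simplicial differential `∂ = β^* - α^*` (with respect to the transformation
groupoid `Q ⇉ P`), on `𝔤`-valued forms. -/
def partialT {G : Type} [Group G] {Γ : Gpd} {P : Type}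
    (F : FormsTheory) (𝔤 : Type) [AddCommGroup 𝔤] [Module ℝ 𝔤] (B : GpdBundle G Γ P) :
    F.Ω P ⊗[ℝ] 𝔤 →ₗ[ℝ] F.Ω (QSp B) ⊗[ℝ] 𝔤 :=
  pullT F (Qbeta B) 𝔤 - pullT F (Qalpha B) 𝔤

/-- The curvature `Ω = dθ + ½ [θ, θ]` of a pseudo-connection. -/
def curv (F : FormsTheory) {P : Type} (𝔤 : Type) [LieRing 𝔤] [LieAlgebra ℝ 𝔤]
    (θ : F.Ω P ⊗[ℝ] 𝔤) : F.Ω P ⊗[ℝ] 𝔤 :=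
  LinearMap.rTensor 𝔤 (F.d P) θ + (1 / 2 : ℝ) • (brT (F.Ω P) 𝔤 θ θ)

/-- Pairs of composable arrows: level 2 of the nerve of `Γ`. -/
def N2 (Γ : Gpd) : Type := {x : Γ.M × Γ.M // Γ.s x.1 = Γ.t x.2}

def n2e0 (Γ : Gpd) : N2 Γ → Γ.M := fun x => x.1.2
def n2e1 (Γ : Gpd) : N2 Γ → Γ.M := fun x => Γ.comp x.1.1 x.1.2 x.2
def n2e2 (Γ : Gpd) : N2 Γ → Γ.M := fun x => x.1.1

/-- The total de Rham complex `(Ω(Γ_•), δ = (-1)^p d + ∂, ∨)` of the nerve of a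
groupoid with objects `X0`, arrows `X1` (source `β`, target `α`) and composable
pairs `X2` (face maps `e0, e1, e2`), hypothesised abstractly: an `ℝ`-algebra `T`
under the cup product, with total differential `δ` and with the inclusions of the
low columns satisfying the defining relations of the double complex. -/
structure NerveDR (F : FormsTheory) (X0 X1 X2 : Type)
    (β α : X1 → X0) (e0 e1 e2 : X2 → X1) where
  T : Type
  ringT : Ring T
  algT : Algebra ℝ T
  δ : T →ₗ[ℝ] T
  δ_δ : ∀ a, δ (δ a) = 0
  δ_one : δ 1 = 0
  δ_mul_closed : ∀ a b, δ a = 0 → δ b = 0 → δ (a * b) = 0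
  ι0 : F.Ω X0 →ₗ[ℝ] T
  ι1 : F.Ω X1 →ₗ[ℝ] T
  ι2 : F.Ω X2 →ₗ[ℝ] T
  ι0_injective : Function.Injective ι0
  ι0_one : ι0 1 = 1
  ι0_mul : ∀ a b, ι0 a * ι0 b = ι0 (a * b)
  δ_ι0 : ∀ ω, δ (ι0 ω) = ι0 (F.d X0 ω) + ι1 (F.pull β ω - F.pull α ω)
  δ_ι1 : ∀ ω, δ (ι1 ω) = - ι1 (F.d X1 ω) +
    ι2 (F.pull e0 ω - F.pull e1 ω + F.pull e2 ω)
  cup01 : ∀ (k : ℕ) (a : F.Ω X0) (b : F.Ω X1), a ∈ F.gr X0 k →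
    ι0 a * ι1 b = ((-1 : ℝ) ^ k) • ι1 (F.pull α a * b)
  cup10 : ∀ (a : F.Ω X1) (b : F.Ω X0), ι1 a * ι0 b = ι1 (a * F.pull β b)

attribute [instance] NerveDR.ringT NerveDR.algT

/-- The de Rham double complex of the nerve `Γ_•` of a groupoid `Γ`. -/
abbrev GpdDR (F : FormsTheory) (Γ : Gpd) :=
  NerveDR F Γ.O Γ.M (N2 Γ) Γ.s Γ.t (n2e0 Γ) (n2e1 Γ) (n2e2 Γ)

/-- Closed forms `Z^*` of the total complex, as a subalgebra. -/
def ZSub {F : FormsTheory} {X0 X1 X2 : Type} {β α : X1 → X0} {e0 e1 e2 : X2 → X1}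
    (D : NerveDR F X0 X1 X2 β α e0 e1 e2) : Subalgebra ℝ D.T where
  carrier := {a | D.δ a = 0}
  mul_mem' := fun ha hb => D.δ_mul_closed _ _ ha hb
  one_mem' := D.δ_one
  add_mem' := fun {a b} ha hb => by
    have ha' : D.δ a = 0 := ha
    have hb' : D.δ b = 0 := hb
    show D.δ (a + b) = 0
    rw [map_add, ha', hb', add_zero]
  zero_mem' := by simp
  algebraMap_mem' := fun r => by
    show D.δ _ = 0
    rw [Algebra.algebraMap_eq_smul_one, map_smul, D.δ_one, smul_zero]

theorem mem_ZSub {F : FormsTheory} {X0 X1 X2 : Type} {β α : X1 → X0}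
    {e0 e1 e2 : X2 → X1} {D : NerveDR F X0 X1 X2 β α e0 e1 e2} {a : D.T} :
    a ∈ ZSub D ↔ D.δ a = 0 := Iff.rfl

/-- Two closed forms are identified in cohomology iff they differ by a coboundary. -/
def exRel {F : FormsTheory} {X0 X1 X2 : Type} {β α : X1 → X0} {e0 e1 e2 : X2 → X1}
    (D : NerveDR F X0 X1 X2 β α e0 e1 e2) : ↥(ZSub D) → ↥(ZSub D) → Prop :=
  fun a b => ∃ c : D.T, (a : D.T) - b = D.δ c

/-- The de Rham cohomology ring `H^*` of the total complex. -/
def Hcoh {F : FormsTheory} {X0 X1 X2 : Type} {β α : X1 → X0} {e0 e1 e2 : X2 → X1}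
    (D : NerveDR F X0 X1 X2 β α e0 e1 e2) : Type :=
  RingQuot (exRel D)

instance {F : FormsTheory} {X0 X1 X2 : Type} {β α : X1 → X0} {e0 e1 e2 : X2 → X1}
    (D : NerveDR F X0 X1 X2 β α e0 e1 e2) : Ring (Hcoh D) := by
  unfold Hcoh; infer_instance

instance {F : FormsTheory} {X0 X1 X2 : Type} {β α : X1 → X0} {e0 e1 e2 : X2 → X1}
    (D : NerveDR F X0 X1 X2 β α e0 e1 e2) : Algebra ℝ (Hcoh D) := by
  unfold Hcoh; infer_instance

/-- Projection from closed forms onto cohomology classes. -/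
def toH {F : FormsTheory} {X0 X1 X2 : Type} {β α : X1 → X0} {e0 e1 e2 : X2 → X1}
    (D : NerveDR F X0 X1 X2 β α e0 e1 e2) : ↥(ZSub D) →ₐ[ℝ] Hcoh D :=
  RingQuot.mkAlgHom ℝ (exRel D)

/-- Polynomial functions on `𝔤`: the subalgebra of `𝔤 → ℝ` generated by the linear
functionals (i.e. `S(𝔤^*)` realised as functions). -/
def polySub (𝔤 : Type) [AddCommGroup 𝔤] [Module ℝ 𝔤] : Subalgebra ℝ (𝔤 → ℝ) :=
  Algebra.adjoin ℝ {f : 𝔤 → ℝ | ∃ l : 𝔤 →ₗ[ℝ] ℝ, f = ⇑l}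

/-- `Ad`-invariant functions on `𝔤`. -/
def invSub (G : Type) [Group G] (𝔤 : Type) [AddCommGroup 𝔤] [Module ℝ 𝔤]
    (Ad : G →* Module.End ℝ 𝔤) : Subalgebra ℝ (𝔤 → ℝ) where
  carrier := {f | ∀ (g : G) (x : 𝔤), f (Ad g x) = f x}
  mul_mem' := fun hf hg g x => by simp only [Pi.mul_apply, hf g x, hg g x]
  one_mem' := fun g x => rfl
  add_mem' := fun hf hg g x => by simp only [Pi.add_apply, hf g x, hg g x]
  zero_mem' := fun g x => rfl
  algebraMap_mem' := fun r g x => rfl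

/-- The algebra `S(𝔤^*)^G` of `G`-invariant polynomials on `𝔤`. -/
def invPoly (G : Type) [Group G] (𝔤 : Type) [AddCommGroup 𝔤] [Module ℝ 𝔤]
    (Ad : G →* Module.End ℝ 𝔤) : Subalgebra ℝ (𝔤 → ℝ) :=
  polySub 𝔤 ⊓ invSub G 𝔤 Ad

/-- A Chern-Weil system for a principal `G`-bundle over a groupoid: for every
pseudo-connection `θ` a cochain-level map `z_θ : S(𝔤^*)^G → Z^*(Γ_•)` with values in
closed forms, all inducing one and the same algebra homomorphism
`w : S(𝔤^*)^G → H^*(Γ_•)` on cohomology (independence of the pseudo-connection). -/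
structure CWSystem (G : Type) [Group G] (𝔤 : Type) [LieRing 𝔤] [LieAlgebra ℝ 𝔤]
    (Ad : G →* Module.End ℝ 𝔤) {Γ : Gpd} {P : Type}
    (F : FormsTheory) (B : GpdBundle G Γ P) (cd : ContractionData F 𝔤 P)
    (D : GpdDR F Γ) where
  z : ∀ θ : F.Ω P ⊗[ℝ] 𝔤, IsPseudoConn G 𝔤 Ad F B cd θ →
    (↥(invPoly G 𝔤 Ad) → ↥(ZSub D))
  w : ↥(invPoly G 𝔤 Ad) →ₐ[ℝ] Hcoh D
  z_w : ∀ θ hθ f, toH D (z θ hθ f) = w f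

end

noncomputable section

/-- A generalized homomorphism `Γ₀' ←τ Z →σ Γ₀` from `Γ'` to `Γ`. -/
structure GenHom (Γ' Γ : Gpd) where
  Z : Type
  τ : Z → Γ'.O
  σ : Z → Γ.O
  lact : ∀ (γ : Γ'.M) (z : Z), Γ'.s γ = τ z → Z
  ract : ∀ (z : Z) (δ : Γ.M), σ z = Γ.t δ → Z
  τ_lact : ∀ γ z h, τ (lact γ z h) = Γ'.t γ
  σ_lact : ∀ γ z h, σ (lact γ z h) = σ z
  τ_ract : ∀ z δ h, τ (ract z δ h) = τ z
  σ_ract : ∀ z δ h, σ (ract z δ h) = Γ.s δ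
  lact_unit : ∀ z, lact (Γ'.unit (τ z)) z (Γ'.s_unit _) = z
  lact_comp : ∀ γ₁ γ₂ z (h₁ : Γ'.s γ₁ = Γ'.t γ₂) (h₂ : Γ'.s γ₂ = τ z),
    lact γ₁ (lact γ₂ z h₂) (h₁.trans (τ_lact γ₂ z h₂).symm)
      = lact (Γ'.comp γ₁ γ₂ h₁) z ((Γ'.s_comp _ _ _).trans h₂)
  ract_unit : ∀ z, ract z (Γ.unit (σ z)) (Γ.t_unit _).symm = z
  ract_comp : ∀ z δ₁ δ₂ (h₁ : σ z = Γ.t δ₁) (h₂ : Γ.s δ₁ = Γ.t δ₂),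
    ract (ract z δ₁ h₁) δ₂ ((σ_ract z δ₁ h₁).trans h₂)
      = ract z (Γ.comp δ₁ δ₂ h₂) (h₁.trans (Γ.t_comp _ _ _).symm)
  act_comm : ∀ γ z δ (hγ : Γ'.s γ = τ z) (hδ : σ z = Γ.t δ),
    ract (lact γ z hγ) δ ((σ_lact γ z hγ).trans hδ)
      = lact γ (ract z δ hδ) (hγ.trans (τ_ract z δ hδ).symm)
  τ_surj : Function.Surjective τ
  principal : ∀ z z', τ z = τ z' → ∃ (δ : Γ.M) (h : σ z = Γ.t δ),
    ract z δ h = z' ∧ ∀ (δ₂ : Γ.M) (h₂ : σ z = Γ.t δ₂), ract z δ₂ h₂ = z' → δ₂ = δ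

/-- The fibred product `Z ×_{Γ₀} P`. -/
def PBW {G : Type} [Group G] {Γ' Γ : Gpd} (φ : GenHom Γ' Γ) {P : Type}
    (B : GpdBundle G Γ P) : Type :=
  {x : φ.Z × P // φ.σ x.1 = B.proj x.2}

/-- The projection `σ̃ : Z ×_{Γ₀} P → P`. -/
def pbσ {G : Type} [Group G] {Γ' Γ : Gpd} (φ : GenHom Γ' Γ) {P : Type}
    (B : GpdBundle G Γ P) : PBW φ B → P := fun w => w.1.2

/-- The diagonal `Γ`-orbit relation on `Z ×_{Γ₀} P`, whose quotient is the
pull-back bundle `P' = (Z ×_{Γ₀} P)/Γ`. -/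
def pbRel {G : Type} [Group G] {Γ' Γ : Gpd} (φ : GenHom Γ' Γ) {P : Type}
    (B : GpdBundle G Γ P) : PBW φ B → PBW φ B → Prop :=
  fun a b => ∃ (γ : Γ.M) (h : φ.σ a.1.1 = Γ.t γ) (hp : Γ.s γ = B.proj b.1.2),
    b.1.1 = φ.ract a.1.1 γ h ∧ a.1.2 = B.gact γ b.1.2 hp

/-- `(P', q, B')` realises the pull-back principal `G`-bundle
`φ^* P = (Z ×_{Γ₀} P)/Γ` over `Γ' ⇉ Γ₀'`, with its canonical `G`- and
`Γ'`-actions (`τ̃ = q` being the quotient map). -/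
structure PullbackReal {G : Type} [Group G] {Γ' Γ : Gpd} (φ : GenHom Γ' Γ)
    {P : Type} (B : GpdBundle G Γ P)
    (P' : Type) (q : PBW φ B → P') (B' : GpdBundle G Γ' P') : Prop where
  surj : Function.Surjective q
  eq_iff : ∀ a b : PBW φ B, q a = q b ↔ Relation.EqvGen (pbRel φ B) a b
  proj_eq : ∀ w, B'.proj (q w) = φ.τ w.1.1
  act_eq : ∀ w g, B'.act (q w) g =
    q ⟨(w.1.1, B.act w.1.2 g), w.2.trans (B.proj_act w.1.2 g).symm⟩
  gact_eq : ∀ γ' w (h : Γ'.s γ' = B'.proj (q w)) (h' : Γ'.s γ' = φ.τ w.1.1),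
    B'.gact γ' (q w) h =
      q ⟨(φ.lact γ' w.1.1 h', w.1.2), (φ.σ_lact γ' w.1.1 h').trans w.2⟩

/-- The fibred product `Z'' ×_{Γ₀'} Z` underlying the composition of two
generalized homomorphisms. -/
def CompW {Γ'' Γ' Γ : Gpd} (ψ : GenHom Γ'' Γ') (φ : GenHom Γ' Γ) : Type :=
  {x : ψ.Z × φ.Z // ψ.σ x.1 = φ.τ x.2}

/-- `(χ, mk)` realises the composition `φ ∘ ψ` of the generalized homomorphisms
`ψ` and `φ` (i.e. `χ.Z = (Z'' ×_{Γ₀'} Z)/Γ'` with `mk` the quotient map). -/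
structure CompReal {Γ'' Γ' Γ : Gpd} (ψ : GenHom Γ'' Γ') (φ : GenHom Γ' Γ)
    (χ : GenHom Γ'' Γ) (mk : CompW ψ φ → χ.Z) : Prop where
  surj : Function.Surjective mk
  τ_eq : ∀ x, χ.τ (mk x) = ψ.τ x.1.1
  σ_eq : ∀ x, χ.σ (mk x) = φ.σ x.1.2

/-!
Pulling back along the surjection `q = τ̃` is injective, so every identity on `P'` can be
checked on `Z ×_{Γ₀} P`, where `q^*θ' = σ̃^*θ`. The fibres of `q` are diagonal `Γ`-orbits,
and `∂θ = 0` says precisely that `θ` is invariant under the `Γ`-action; hence `σ̃^*θ` is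
constant along them and `θ' = s^*σ̃^*θ` works for any section `s` of `q`. The remaining
properties transfer along the commuting squares that relate the `G`- and `Γ'`-actions on
`P'` to those on `Z ×_{Γ₀} P`.
-/

section PullbackOfForms

variable (F : FormsTheory) (𝔤 : Type) [AddCommGroup 𝔤] [Module ℝ 𝔤]

theorem pullT_comp {X Y Z : Type} (f : X → Y) (g : Y → Z) (ω : F.Ω Z ⊗[ℝ] 𝔤) :
    pullT F (g ∘ f) 𝔤 ω = pullT F f 𝔤 (pullT F g 𝔤 ω) := by
  have h : (F.pull (g ∘ f)).toLinearMap
      = (F.pull f).toLinearMap ∘ₗ (F.pull g).toLinearMap :=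
    LinearMap.ext (F.pull_comp f g)
  simp only [pullT, h, LinearMap.rTensor_comp_apply]

theorem pullT_id {X : Type} (ω : F.Ω X ⊗[ℝ] 𝔤) : pullT F (id : X → X) 𝔤 ω = ω := by
  have h : (F.pull (id : X → X)).toLinearMap = LinearMap.id := LinearMap.ext (F.pull_id X)
  simp only [pullT, h, LinearMap.rTensor_id, LinearMap.id_apply]

theorem pullT_comp_eq_of_pullT_eq {W X Y Y' : Type} {q : W → Y} {σ : W → Y'}
    {θ' : F.Ω Y ⊗[ℝ] 𝔤} {θ : F.Ω Y' ⊗[ℝ] 𝔤} (h : pullT F q 𝔤 θ' = pullT F σ 𝔤 θ)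
    (a : X → W) : pullT F (q ∘ a) 𝔤 θ' = pullT F (σ ∘ a) 𝔤 θ := by
  rw [pullT_comp, h, pullT_comp]

theorem pullT_leftInverse_surjInv {X Y : Type} {u : X → Y} (hu : Function.Surjective u) :
    Function.LeftInverse (pullT F (Function.surjInv hu) 𝔤) (pullT F u 𝔤) := fun ω => by
  rw [← pullT_comp, (Function.rightInverse_surjInv hu).comp_eq_id, pullT_id]

theorem pullT_injective {X Y : Type} {u : X → Y} (hu : Function.Surjective u) :
    Function.Injective (pullT F u 𝔤) :=
  (pullT_leftInverse_surjInv F 𝔤 hu).injective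

theorem pullT_rTensor {X Y : Type} (f : X → Y) {gY : F.Ω Y →ₗ[ℝ] F.Ω Y}
    {gX : F.Ω X →ₗ[ℝ] F.Ω X} (hc : ∀ ω, F.pull f (gY ω) = gX (F.pull f ω))
    (t : F.Ω Y ⊗[ℝ] 𝔤) :
    pullT F f 𝔤 (LinearMap.rTensor 𝔤 gY t) = LinearMap.rTensor 𝔤 gX (pullT F f 𝔤 t) := by
  have h : (F.pull f).toLinearMap ∘ₗ gY = gX ∘ₗ (F.pull f).toLinearMap := LinearMap.ext hc
  simp only [pullT, ← LinearMap.rTensor_comp_apply, h]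

theorem pullT_lTensor {X Y : Type} (f : X → Y) (A : 𝔤 →ₗ[ℝ] 𝔤) (t : F.Ω Y ⊗[ℝ] 𝔤) :
    pullT F f 𝔤 (LinearMap.lTensor (F.Ω Y) A t)
      = LinearMap.lTensor (F.Ω X) A (pullT F f 𝔤 t) := by
  simp only [pullT, ← LinearMap.comp_apply, LinearMap.rTensor_comp_lTensor,
    LinearMap.lTensor_comp_rTensor]

theorem pullT_one_tmul {X Y : Type} (f : X → Y) (v : 𝔤) :
    pullT F f 𝔤 ((1 : F.Ω Y) ⊗ₜ[ℝ] v) = (1 : F.Ω X) ⊗ₜ[ℝ] v := by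
  simp [pullT]

theorem pullT_mem_grT {X Y : Type} (f : X → Y) {k : ℕ} {ω : F.Ω Y ⊗[ℝ] 𝔤}
    (hω : ω ∈ grT F Y 𝔤 k) : pullT F f 𝔤 ω ∈ grT F X 𝔤 k := by
  obtain ⟨u, rfl⟩ := hω
  refine ⟨TensorProduct.map (LinearMap.codRestrict (F.gr X k)
    ((F.pull f).toLinearMap ∘ₗ (F.gr Y k).subtype)
    (fun c => F.pull_gr f k c c.2)) LinearMap.id u, ?_⟩
  induction u using TensorProduct.induction_on with
  | zero => simp
  | tmul a x => simp [pullT]; rfl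
  | add a b ha hb => simp only [map_add, ha, hb]

theorem mem_grT_of_pullT_eq {W X Y : Type} {q : W → X} (hq : Function.Surjective q)
    {σ : W → Y} {θ' : F.Ω X ⊗[ℝ] 𝔤} {θ : F.Ω Y ⊗[ℝ] 𝔤}
    (h : pullT F q 𝔤 θ' = pullT F σ 𝔤 θ) {k : ℕ} (hθ : θ ∈ grT F Y 𝔤 k) :
    θ' ∈ grT F X 𝔤 k := by
  rw [← pullT_leftInverse_surjInv F 𝔤 hq θ', h, ← pullT_comp]
  exact pullT_mem_grT F 𝔤 _ hθ

theorem rTensor_eq_one_tmul_of_pullT_eq {W X Y : Type} {q : W → X}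
    (hq : Function.Surjective q) {σ : W → Y} {θ' : F.Ω X ⊗[ℝ] 𝔤} {θ : F.Ω Y ⊗[ℝ] 𝔤}
    (h : pullT F q 𝔤 θ' = pullT F σ 𝔤 θ) {iX : F.Ω X →ₗ[ℝ] F.Ω X}
    {iY : F.Ω Y →ₗ[ℝ] F.Ω Y} {iW : F.Ω W →ₗ[ℝ] F.Ω W}
    (hiq : ∀ ω, F.pull q (iX ω) = iW (F.pull q ω))
    (hiσ : ∀ ω, F.pull σ (iY ω) = iW (F.pull σ ω)) {v : 𝔤}
    (hθ : LinearMap.rTensor 𝔤 iY θ = (1 : F.Ω Y) ⊗ₜ[ℝ] v) :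
    LinearMap.rTensor 𝔤 iX θ' = (1 : F.Ω X) ⊗ₜ[ℝ] v := by
  apply pullT_injective F 𝔤 hq
  rw [pullT_rTensor F 𝔤 q hiq, h, ← pullT_rTensor F 𝔤 σ hiσ, hθ, pullT_one_tmul,
    pullT_one_tmul]

end PullbackOfForms

section Curvature

variable (F : FormsTheory) (𝔤 : Type) [LieRing 𝔤] [LieAlgebra ℝ 𝔤]

theorem brT_tmul (A : Type) [Ring A] [Algebra ℝ A] (a b : A) (x y : 𝔤) :
    brT A 𝔤 (a ⊗ₜ[ℝ] x) (b ⊗ₜ[ℝ] y) = (a * b) ⊗ₜ[ℝ] ⁅x, y⁆ := by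
  simp [brT]

theorem pullT_brT {X Y : Type} (f : X → Y) (a b : F.Ω Y ⊗[ℝ] 𝔤) :
    pullT F f 𝔤 (brT (F.Ω Y) 𝔤 a b) = brT (F.Ω X) 𝔤 (pullT F f 𝔤 a) (pullT F f 𝔤 b) := by
  induction a using TensorProduct.induction_on with
  | zero => simp
  | add a₁ a₂ h₁ h₂ => simp only [map_add, LinearMap.add_apply, h₁, h₂]
  | tmul ω x =>
    induction b using TensorProduct.induction_on with
    | zero => simp
    | add b₁ b₂ g₁ g₂ => simp only [map_add, g₁, g₂]
    | tmul ω' y => simp only [brT_tmul, pullT, LinearMap.rTensor_tmul,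
        AlgHom.toLinearMap_apply, map_mul]

theorem pullT_curv {X Y : Type} (f : X → Y) (θ : F.Ω Y ⊗[ℝ] 𝔤) :
    pullT F f 𝔤 (curv F 𝔤 θ) = curv F 𝔤 (pullT F f 𝔤 θ) := by
  rw [curv, curv, map_add, map_smul, pullT_brT, pullT_rTensor F 𝔤 f (F.pull_d f)]

theorem pullT_curv_eq_of_pullT_eq {W X Y : Type} {q : W → X} {σ : W → Y}
    {θ' : F.Ω X ⊗[ℝ] 𝔤} {θ : F.Ω Y ⊗[ℝ] 𝔤} (h : pullT F q 𝔤 θ' = pullT F σ 𝔤 θ) :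
    pullT F q 𝔤 (curv F 𝔤 θ') = pullT F σ 𝔤 (curv F 𝔤 θ) := by
  rw [pullT_curv, h, pullT_curv]

end Curvature

namespace GpdBundle

variable {G : Type} [Group G] {Γ : Gpd} {P : Type} (B : GpdBundle G Γ P)

def orbitRel (p p' : P) : Prop :=
  ∃ (γ : Γ.M) (h : Γ.s γ = B.proj p'), p = B.gact γ p' h

theorem gact_congr {γ₁ γ₂ : Γ.M} {p₁ p₂ : P} (hγ : γ₁ = γ₂) (hp : p₁ = p₂)
    (h₁ : Γ.s γ₁ = B.proj p₁) (h₂ : Γ.s γ₂ = B.proj p₂) :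
    B.gact γ₁ p₁ h₁ = B.gact γ₂ p₂ h₂ := by
  subst hγ hp
  rfl

theorem orbitRel_equivalence : Equivalence B.orbitRel where
  refl p := ⟨Γ.unit (B.proj p), Γ.s_unit _, (B.gact_unit p).symm⟩
  symm := by
    rintro _ p ⟨γ, hγ, rfl⟩
    refine ⟨Γ.inv γ, by rw [Γ.s_inv, B.gact_proj], ?_⟩
    rw [B.gact_comp _ _ _ (Γ.s_inv γ) hγ]
    exact (B.gact_congr (by rw [Γ.inv_comp, hγ]) rfl _ (Γ.s_unit _)).trans (B.gact_unit p)
      |>.symm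
  trans := by
    rintro _ _ p ⟨γ₁, h₁, rfl⟩ ⟨γ₂, h₂, rfl⟩
    exact ⟨_, (Γ.s_comp _ _ _).trans h₂,
      B.gact_comp γ₁ γ₂ p (h₁.trans (B.gact_proj _ _ _)) h₂⟩

end GpdBundle

section Descent

variable {G : Type} [Group G] {Γ : Gpd} {P : Type} {B : GpdBundle G Γ P}
  (F : FormsTheory) (𝔤 : Type) [AddCommGroup 𝔤] [Module ℝ 𝔤] {θ : F.Ω P ⊗[ℝ] 𝔤}

theorem partialT_eq_zero_iff :
    partialT F 𝔤 B θ = 0 ↔ pullT F (Qbeta B) 𝔤 θ = pullT F (Qalpha B) 𝔤 θ := by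
  rw [partialT, LinearMap.sub_apply, sub_eq_zero]

theorem pullT_eq_of_orbitRel (hθ : partialT F 𝔤 B θ = 0) {X : Type} {f g : X → P}
    (h : ∀ x, B.orbitRel (f x) (g x)) : pullT F f 𝔤 θ = pullT F g 𝔤 θ := by
  choose γ hγ hf using h
  let c : X → QSp B := fun x => ⟨(γ x, g x), hγ x⟩
  have hα : f = Qalpha B ∘ c := funext hf
  have hβ : g = Qbeta B ∘ c := rfl
  rw [hα, hβ, pullT_comp, pullT_comp, (partialT_eq_zero_iff F 𝔤).1 hθ]

end Descent

namespace PullbackReal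

variable {G : Type} [Group G] {Γ' Γ : Gpd} {φ : GenHom Γ' Γ} {P : Type}
  {B : GpdBundle G Γ P} {P' : Type} {q : PBW φ B → P'} {B' : GpdBundle G Γ' P'}
  (hR : PullbackReal φ B P' q B')
include hR

theorem orbitRel_of_eq {a b : PBW φ B} (h : q a = q b) :
    B.orbitRel (pbσ φ B a) (pbσ φ B b) :=
  (B.orbitRel_equivalence.comap (pbσ φ B)).eqvGen_iff.1 <|
    ((hR.eq_iff a b).1 h).mono fun _ _ ⟨γ, _, hp, _, e⟩ => ⟨γ, hp, e⟩

section Forms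

variable (F : FormsTheory) (𝔤 : Type) [AddCommGroup 𝔤] [Module ℝ 𝔤]
  {θ : F.Ω P ⊗[ℝ] 𝔤} {θ' : F.Ω P' ⊗[ℝ] 𝔤}

theorem existsUnique_pullT_eq (hθ : partialT F 𝔤 B θ = 0) :
    ∃! θ' : F.Ω P' ⊗[ℝ] 𝔤, pullT F q 𝔤 θ' = pullT F (pbσ φ B) 𝔤 θ := by
  let s := Function.surjInv hR.surj
  have hdesc : pullT F q 𝔤 (pullT F (pbσ φ B ∘ s) 𝔤 θ) = pullT F (pbσ φ B) 𝔤 θ := by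
    rw [← pullT_comp]
    exact pullT_eq_of_orbitRel F 𝔤 hθ fun w =>
      hR.orbitRel_of_eq (Function.surjInv_eq hR.surj (q w))
  exact ⟨_, hdesc, fun θ' h => pullT_injective F 𝔤 hR.surj (h.trans hdesc.symm)⟩

theorem pullT_act_eq (hθ' : pullT F q 𝔤 θ' = pullT F (pbσ φ B) 𝔤 θ) (g : G) :
    pullT F q 𝔤 (pullT F (fun p' => B'.act p' g) 𝔤 θ')
      = pullT F (pbσ φ B) 𝔤 (pullT F (fun p => B.act p g) 𝔤 θ) := by
  let a : PBW φ B → PBW φ B := fun w =>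
    ⟨(w.1.1, B.act w.1.2 g), w.2.trans (B.proj_act w.1.2 g).symm⟩
  have hq : (fun p' => B'.act p' g) ∘ q = q ∘ a := funext fun w => hR.act_eq w g
  have hσ : (fun p => B.act p g) ∘ pbσ φ B = pbσ φ B ∘ a := rfl
  rw [← pullT_comp, ← pullT_comp, hq, hσ, pullT_comp_eq_of_pullT_eq F 𝔤 hθ']

theorem partialT_eq_zero (hθ' : pullT F q 𝔤 θ' = pullT F (pbσ φ B) 𝔤 θ) :
    partialT F 𝔤 B' θ' = 0 := by
  let A := {x : Γ'.M × PBW φ B // Γ'.s x.1 = φ.τ x.2.1.1}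
  let c : A → QSp B' := fun x => ⟨(x.1.1, q x.1.2), x.2.trans (hR.proj_eq x.1.2).symm⟩
  let src : A → PBW φ B := fun x => x.1.2
  let tgt : A → PBW φ B := fun x =>
    ⟨(φ.lact x.1.1 x.1.2.1.1 x.2, x.1.2.1.2), (φ.σ_lact _ _ _).trans x.1.2.2⟩
  have hc : Function.Surjective c := by
    rintro ⟨⟨γ', p'⟩, hx⟩
    obtain ⟨w, rfl⟩ := hR.surj p'
    exact ⟨⟨(γ', w), hx.trans (hR.proj_eq w)⟩, rfl⟩
  have hβ : Qbeta B' ∘ c = q ∘ src := rfl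
  have hα : Qalpha B' ∘ c = q ∘ tgt := funext fun x => hR.gact_eq x.1.1 x.1.2 _ x.2
  rw [partialT_eq_zero_iff]
  apply pullT_injective F 𝔤 hc
  rw [← pullT_comp, ← pullT_comp, hβ, hα, pullT_comp_eq_of_pullT_eq F 𝔤 hθ',
    pullT_comp_eq_of_pullT_eq F 𝔤 hθ']
  rfl

end Forms

theorem isPseudoConn {𝔤 : Type} [LieRing 𝔤] [LieAlgebra ℝ 𝔤] {Ad : G →* Module.End ℝ 𝔤}
    {F : FormsTheory} {cd : ContractionData F 𝔤 P} {cd' : ContractionData F 𝔤 P'}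
    {cdW : ContractionData F 𝔤 (PBW φ B)}
    (hcdq : ∀ X ω, F.pull q (cd'.i X ω) = cdW.i X (F.pull q ω))
    (hcdσ : ∀ X ω, F.pull (pbσ φ B) (cd.i X ω) = cdW.i X (F.pull (pbσ φ B) ω))
    {θ : F.Ω P ⊗[ℝ] 𝔤} (hθ : IsPseudoConn G 𝔤 Ad F B cd θ) {θ' : F.Ω P' ⊗[ℝ] 𝔤}
    (hθ' : pullT F q 𝔤 θ' = pullT F (pbσ φ B) 𝔤 θ) :
    IsPseudoConn G 𝔤 Ad F B' cd' θ' := by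
  obtain ⟨hdeg, hcontr, hequiv⟩ := hθ
  refine ⟨mem_grT_of_pullT_eq F 𝔤 hR.surj hθ' hdeg,
    fun X => rTensor_eq_one_tmul_of_pullT_eq F 𝔤 hR.surj hθ' (hcdq X) (hcdσ X) (hcontr X),
    fun g => pullT_injective F 𝔤 hR.surj ?_⟩
  rw [hR.pullT_act_eq F 𝔤 hθ', hequiv, pullT_lTensor, ← hθ', pullT_lTensor]

theorem pullT_compReal_eq {Γ'' : Gpd} {ψ : GenHom Γ'' Γ'} {χ : GenHom Γ'' Γ}
    {mk : CompW ψ φ → χ.Z} (hχ : CompReal ψ φ χ mk) {P'' : Type} {q₂ : PBW ψ B' → P''}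
    (hq₂ : Function.Surjective q₂) {P₃ : Type} {q₃ : PBW χ B → P₃} {Φ : P'' → P₃}
    (hΦ : ∀ (u : ψ.Z) (z : φ.Z) (p : P) (h₁ : ψ.σ u = φ.τ z)
      (hzp : φ.σ z = B.proj p)
      (h₂ : ψ.σ u = B'.proj (q ⟨(z, p), hzp⟩))
      (h₃ : χ.σ (mk ⟨(u, z), h₁⟩) = B.proj p),
      Φ (q₂ ⟨(u, q ⟨(z, p), hzp⟩), h₂⟩) = q₃ ⟨(mk ⟨(u, z), h₁⟩, p), h₃⟩)
    (F : FormsTheory) (𝔤 : Type) [AddCommGroup 𝔤] [Module ℝ 𝔤]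
    {θ : F.Ω P ⊗[ℝ] 𝔤} {θ' : F.Ω P' ⊗[ℝ] 𝔤} {θ'' : F.Ω P'' ⊗[ℝ] 𝔤}
    {θ₃ : F.Ω P₃ ⊗[ℝ] 𝔤}
    (h₁ : pullT F q 𝔤 θ' = pullT F (pbσ φ B) 𝔤 θ)
    (h₂ : pullT F q₂ 𝔤 θ'' = pullT F (pbσ ψ B') 𝔤 θ')
    (h₃ : pullT F q₃ 𝔤 θ₃ = pullT F (pbσ χ B) 𝔤 θ) :
    pullT F Φ 𝔤 θ₃ = θ'' := by
  let s := Function.surjInv hR.surj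
  have hs : ∀ p', q (s p') = p' := Function.surjInv_eq hR.surj
  have hτ : ∀ x : PBW ψ B', ψ.σ x.1.1 = φ.τ (s x.1.2).1.1 := fun x =>
    x.2.trans ((congrArg B'.proj (hs x.1.2)).symm.trans (hR.proj_eq (s x.1.2)))
  let Ψ : PBW ψ B' → PBW χ B := fun x =>
    ⟨(mk ⟨(x.1.1, (s x.1.2).1.1), hτ x⟩, (s x.1.2).1.2), (hχ.σ_eq _).trans (s x.1.2).2⟩
  have hΦΨ : Φ ∘ q₂ = q₃ ∘ Ψ := by
    funext ⟨⟨u, p'⟩, hx⟩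
    show Φ (q₂ _) = q₃ _
    convert hΦ u (s p').1.1 (s p').1.2 (hτ ⟨⟨u, p'⟩, hx⟩) (s p').2
      (hx.trans (congrArg B'.proj (hs p')).symm) ((hχ.σ_eq _).trans (s p').2) using 2
    exact congrArg q₂ (Subtype.ext (Prod.ext rfl (hs p').symm))
  have hσ : pbσ χ B ∘ Ψ = pbσ φ B ∘ (s ∘ pbσ ψ B') := rfl
  have hqs : q ∘ (s ∘ pbσ ψ B') = pbσ ψ B' := funext fun x => hs _
  apply pullT_injective F 𝔤 hq₂
  rw [← pullT_comp, hΦΨ, pullT_comp_eq_of_pullT_eq F 𝔤 h₃, hσ,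
    ← pullT_comp_eq_of_pullT_eq F 𝔤 h₁, hqs, h₂]

end PullbackReal

theorem pullback_connection_general
    (G : Type) [Group G] (𝔤 : Type) [LieRing 𝔤] [LieAlgebra ℝ 𝔤]
    (Ad : G →* Module.End ℝ 𝔤)
    (Γ Γ' : Gpd) (φ : GenHom Γ' Γ)
    (P : Type) (B : GpdBundle G Γ P)
    (F : FormsTheory) (cd : ContractionData F 𝔤 P)
    -- a realisation of the pull-back bundle `φ^* P`
    (P' : Type) (q : PBW φ B → P') (B' : GpdBundle G Γ' P')
    (hR : PullbackReal φ B P' q B')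
    -- contraction data on `P'` and on `Z ×_{Γ₀} P`, compatible with `q` and `σ̃`
    (cd' : ContractionData F 𝔤 P') (cdW : ContractionData F 𝔤 (PBW φ B))
    (hcdq : ∀ X ω, F.pull q (cd'.i X ω) = cdW.i X (F.pull q ω))
    (hcdσ : ∀ X ω, F.pull (pbσ φ B) (cd.i X ω) = cdW.i X (F.pull (pbσ φ B) ω))
    -- a connection `θ` on `P` over `Γ`
    (θ : F.Ω P ⊗[ℝ] 𝔤) (hθ : IsPseudoConn G 𝔤 Ad F B cd θ)
    (hconn : partialT F 𝔤 B θ = 0) :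
    -- (1) existence and uniqueness of the pull-back `θ'`
    (∃! θ' : F.Ω P' ⊗[ℝ] 𝔤, pullT F q 𝔤 θ' = pullT F (pbσ φ B) 𝔤 θ) ∧
    -- (2) `θ'` is a connection on `P'` over `Γ'`
    (∀ θ' : F.Ω P' ⊗[ℝ] 𝔤, pullT F q 𝔤 θ' = pullT F (pbσ φ B) 𝔤 θ →
      IsPseudoConn G 𝔤 Ad F B' cd' θ' ∧ partialT F 𝔤 B' θ' = 0) ∧
    -- (3) `τ̃^* Ω' = σ̃^* Ω`
    (∀ θ' : F.Ω P' ⊗[ℝ] 𝔤, pullT F q 𝔤 θ' = pullT F (pbσ φ B) 𝔤 θ →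
      pullT F q 𝔤 (curv F 𝔤 θ') = pullT F (pbσ φ B) 𝔤 (curv F 𝔤 θ)) ∧
    -- (4) `φ^* θ` is flat if `θ` is flat
    (curv F 𝔤 θ = 0 → ∀ θ' : F.Ω P' ⊗[ℝ] 𝔤,
      pullT F q 𝔤 θ' = pullT F (pbσ φ B) 𝔤 θ → curv F 𝔤 θ' = 0) ∧
    -- (5) `(φ ∘ ψ)^* θ = ψ^* (φ^* θ)`
    (∀ (Γ'' : Gpd) (ψ : GenHom Γ'' Γ') (χ : GenHom Γ'' Γ)
       (mk : CompW ψ φ → χ.Z) (hχ : CompReal ψ φ χ mk)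
       (P'' : Type) (q₂ : PBW ψ B' → P'') (B'' : GpdBundle G Γ'' P'')
       (hR₂ : PullbackReal ψ B' P'' q₂ B'')
       (P₃ : Type) (q₃ : PBW χ B → P₃) (B₃ : GpdBundle G Γ'' P₃)
       (hR₃ : PullbackReal χ B P₃ q₃ B₃)
       -- the canonical identification of the two pull-back bundles
       (Φ : P'' → P₃), Function.Bijective Φ →
       (∀ (u : ψ.Z) (z : φ.Z) (p : P) (h₁ : ψ.σ u = φ.τ z)
          (hzp : φ.σ z = B.proj p)
          (h₂ : ψ.σ u = B'.proj (q ⟨(z, p), hzp⟩))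
          (h₃ : χ.σ (mk ⟨(u, z), h₁⟩) = B.proj p),
         Φ (q₂ ⟨(u, q ⟨(z, p), hzp⟩), h₂⟩) = q₃ ⟨(mk ⟨(u, z), h₁⟩, p), h₃⟩) →
       ∀ (θ' : F.Ω P' ⊗[ℝ] 𝔤) (θ'' : F.Ω P'' ⊗[ℝ] 𝔤) (θ₃ : F.Ω P₃ ⊗[ℝ] 𝔤),
         pullT F q 𝔤 θ' = pullT F (pbσ φ B) 𝔤 θ →
         pullT F q₂ 𝔤 θ'' = pullT F (pbσ ψ B') 𝔤 θ' →
         pullT F q₃ 𝔤 θ₃ = pullT F (pbσ χ B) 𝔤 θ →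
         pullT F Φ 𝔤 θ₃ = θ'') := by
  refine ⟨hR.existsUnique_pullT_eq F 𝔤 hconn,
    fun θ' hθ' => ⟨hR.isPseudoConn hcdq hcdσ hθ hθ', hR.partialT_eq_zero F 𝔤 hθ'⟩,
    fun θ' hθ' => pullT_curv_eq_of_pullT_eq F 𝔤 hθ',
    fun hflat θ' hθ' => pullT_injective F 𝔤 hR.surj ?_,
    fun Γ'' ψ χ mk hχ P'' q₂ B'' hR₂ P₃ q₃ B₃ _ Φ _ hΦ θ' θ'' θ₃ h₁ h₂ h₃ =>
      hR.pullT_compReal_eq hχ hR₂.surj hΦ F 𝔤 h₁ h₂ h₃⟩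
  rw [pullT_curv_eq_of_pullT_eq F 𝔤 hθ', hflat, map_zero, map_zero]

/-- **Proposition 3.13 (pull-back connections).**
Let `θ` be a connection on the principal `G`-bundle `P` over `Γ ⇉ Γ₀` and let
`φ : Γ₀' ← Z → Γ₀` be a generalized homomorphism from `Γ'` to `Γ`, with pull-back
bundle `P' = (Z ×_{Γ₀} P)/Γ`.  Then: (1) there is a unique `θ' ∈ Ω¹(P') ⊗ 𝔤` with
`τ̃^* θ' = σ̃^* θ`; (2) `θ'` is a connection on `P'` over `Γ'` (the pull-back
connection `φ^* θ`); (3) the curvatures satisfy `τ̃^* Ω' = σ̃^* Ω`; (4) `φ^* θ` is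
flat whenever `θ` is flat; (5) for composable generalized homomorphisms `ψ, φ`,
one has `(φ ∘ ψ)^* θ = ψ^* (φ^* θ)` under the canonical identification `Φ` of the
two pull-back bundles. -/
theorem pullback_connection
    (G : Type) [Group G] (𝔤 : Type) [LieRing 𝔤] [LieAlgebra ℝ 𝔤]
    (Ad : G →* Module.End ℝ 𝔤)
    (Γ Γ' : Gpd) (φ : GenHom Γ' Γ)
    (P : Type) (B : GpdBundle G Γ P) (hB : B.toPrinBundle.IsPrincipal)
    (F : FormsTheory) (cd : ContractionData F 𝔤 P)
    -- a realisation of the pull-back bundle `φ^* P`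
    (P' : Type) (q : PBW φ B → P') (B' : GpdBundle G Γ' P')
    (hR : PullbackReal φ B P' q B')
    -- contraction data on `P'` and on `Z ×_{Γ₀} P`, compatible with `q` and `σ̃`
    (cd' : ContractionData F 𝔤 P') (cdW : ContractionData F 𝔤 (PBW φ B))
    (hcdq : ∀ X ω, F.pull q (cd'.i X ω) = cdW.i X (F.pull q ω))
    (hcdσ : ∀ X ω, F.pull (pbσ φ B) (cd.i X ω) = cdW.i X (F.pull (pbσ φ B) ω))
    -- a connection `θ` on `P` over `Γ`
    (θ : F.Ω P ⊗[ℝ] 𝔤) (hθ : IsPseudoConn G 𝔤 Ad F B cd θ)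
    (hconn : partialT F 𝔤 B θ = 0) :
    -- (1) existence and uniqueness of the pull-back `θ'`
    (∃! θ' : F.Ω P' ⊗[ℝ] 𝔤, pullT F q 𝔤 θ' = pullT F (pbσ φ B) 𝔤 θ) ∧
    -- (2) `θ'` is a connection on `P'` over `Γ'`
    (∀ θ' : F.Ω P' ⊗[ℝ] 𝔤, pullT F q 𝔤 θ' = pullT F (pbσ φ B) 𝔤 θ →
      IsPseudoConn G 𝔤 Ad F B' cd' θ' ∧ partialT F 𝔤 B' θ' = 0) ∧
    -- (3) `τ̃^* Ω' = σ̃^* Ω`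
    (∀ θ' : F.Ω P' ⊗[ℝ] 𝔤, pullT F q 𝔤 θ' = pullT F (pbσ φ B) 𝔤 θ →
      pullT F q 𝔤 (curv F 𝔤 θ') = pullT F (pbσ φ B) 𝔤 (curv F 𝔤 θ)) ∧
    -- (4) `φ^* θ` is flat if `θ` is flat
    (curv F 𝔤 θ = 0 → ∀ θ' : F.Ω P' ⊗[ℝ] 𝔤,
      pullT F q 𝔤 θ' = pullT F (pbσ φ B) 𝔤 θ → curv F 𝔤 θ' = 0) ∧
    -- (5) `(φ ∘ ψ)^* θ = ψ^* (φ^* θ)`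
    (∀ (Γ'' : Gpd) (ψ : GenHom Γ'' Γ') (χ : GenHom Γ'' Γ)
       (mk : CompW ψ φ → χ.Z) (hχ : CompReal ψ φ χ mk)
       (P'' : Type) (q₂ : PBW ψ B' → P'') (B'' : GpdBundle G Γ'' P'')
       (hR₂ : PullbackReal ψ B' P'' q₂ B'')
       (P₃ : Type) (q₃ : PBW χ B → P₃) (B₃ : GpdBundle G Γ'' P₃)
       (hR₃ : PullbackReal χ B P₃ q₃ B₃)
       -- the canonical identification of the two pull-back bundles
       (Φ : P'' → P₃), Function.Bijective Φ →
       (∀ (u : ψ.Z) (z : φ.Z) (p : P) (h₁ : ψ.σ u = φ.τ z)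
          (hzp : φ.σ z = B.proj p)
          (h₂ : ψ.σ u = B'.proj (q ⟨(z, p), hzp⟩))
          (h₃ : χ.σ (mk ⟨(u, z), h₁⟩) = B.proj p),
         Φ (q₂ ⟨(u, q ⟨(z, p), hzp⟩), h₂⟩) = q₃ ⟨(mk ⟨(u, z), h₁⟩, p), h₃⟩) →
       ∀ (θ' : F.Ω P' ⊗[ℝ] 𝔤) (θ'' : F.Ω P'' ⊗[ℝ] 𝔤) (θ₃ : F.Ω P₃ ⊗[ℝ] 𝔤),
         pullT F q 𝔤 θ' = pullT F (pbσ φ B) 𝔤 θ →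
         pullT F q₂ 𝔤 θ'' = pullT F (pbσ ψ B') 𝔤 θ' →
         pullT F q₃ 𝔤 θ₃ = pullT F (pbσ χ B) 𝔤 θ →
         pullT F Φ 𝔤 θ₃ = θ'') :=
  pullback_connection_general G 𝔤 Ad Γ Γ' φ P B F cd P' q B' hR cd' cdW hcdq hcdσ θ hθ hconn

end
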